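/- If x̄, ȳ₁, z̄₁ are points in the hyperbolic plane ℍ² with d(x̄,ȳ₁) = d(x̄,z̄₁) = 1 and the angle at x̄ between the geodesics to ȳ₁ and z̄₁ equals π - α with α ∈ [0, π], then d(ȳ₁, z̄₁) ≤ 2 - c·α² for the constant c = (2/π²)·sinh²(1)/sinh(2). -/

import Mathlib

/-!
Jordan's inequality `cos α ≤ 1 - (2/π²) α²` turns the law of cosines into
`cosh D ≤ cosh 2 - sinh 2 · c α²`; the constant `c` is exactly the one making
`sinh 2 · c = (2/π²) sinh² 1`. Convexity of `cosh` (its tangent line at `2`) bounds the right-hand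
side by `cosh (2 - c α²)`, and `c α² ≤ c π² = tanh 1 < 1` keeps `2 - c α²` nonnegative, so
monotonicity of `cosh` on `[0, ∞)` gives `D ≤ 2 - c α²`.
-/

open Real

lemma abs_sinh_le_cosh (x : ℝ) : |sinh x| ≤ cosh x :=
  abs_le.2 ⟨by linarith [cosh_add_sinh x, exp_pos x], (sinh_lt_cosh x).le⟩

lemma abs_sinh_sub_self_le_cosh_sub_one (x : ℝ) : |sinh x - x| ≤ cosh x - 1 := by
  rw [cosh_eq, sinh_eq]
  exact abs_le.2 ⟨by linarith [add_one_le_exp x], by linarith [add_one_le_exp (-x)]⟩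

/-- The remainder `cosh x (cosh h - 1) + sinh x (sinh h - h)` is nonnegative because each factor
`sinh ·` is dominated in absolute value by the matching factor `cosh ·`. -/
lemma cosh_add_mul_sinh_le_cosh_add (x h : ℝ) : cosh x + h * sinh x ≤ cosh (x + h) := by
  have hcross : -(|sinh x| * |sinh h - h|) ≤ sinh x * (sinh h - h) := by
    rw [← abs_mul]; exact neg_abs_le _
  have hdom : |sinh x| * |sinh h - h| ≤ cosh x * (cosh h - 1) :=
    mul_le_mul (abs_sinh_le_cosh x) (abs_sinh_sub_self_le_cosh_sub_one h) (abs_nonneg _)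
      (cosh_pos x).le
  rw [cosh_add]
  nlinarith

lemma two_mul_sinh_sq_le_sinh_two_mul {x : ℝ} (hx : 0 ≤ x) : 2 * sinh x ^ 2 ≤ sinh (2 * x) := by
  rw [sinh_two_mul, sq, ← mul_assoc]
  exact mul_le_mul_of_nonneg_left (sinh_lt_cosh x).le (by positivity)

/-- Hyperbolic hinge estimate: if `D ≥ 0` is the distance between the points
`ȳ₁, z̄₁` in ℍ² at distance 1 from `x̄` with angle `π - α` at `x̄`, then by the
hyperbolic law of cosines `cosh D = cosh 2 - sinh²1 (1 - cos α)`, and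
`D ≤ 2 - c α²` for `c = (2/π²)·sinh²(1)/sinh(2)`. -/
theorem hyperbolic_hinge_estimate (α D : ℝ) (hα0 : 0 ≤ α) (hαπ : α ≤ Real.pi)
    (hD : 0 ≤ D)
    (hlaw : Real.cosh D = Real.cosh 2 - Real.sinh 1 ^ 2 * (1 - Real.cos α)) :
    D ≤ 2 - (2 / Real.pi ^ 2 * Real.sinh 1 ^ 2 / Real.sinh 2) * α ^ 2 := by
  have hsinh2 : 0 < sinh 2 := sinh_pos_iff.2 two_pos
  set c := 2 / π ^ 2 * sinh 1 ^ 2 / sinh 2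
  have hc : c * sinh 2 = 2 / π ^ 2 * sinh 1 ^ 2 := div_mul_cancel₀ _ hsinh2.ne'
  have hcα : c * α ^ 2 ≤ 1 := by
    have hcπ : c * π ^ 2 ≤ 1 := by
      refine (mul_le_iff_le_one_left hsinh2).1 ?_
      calc c * π ^ 2 * sinh 2 = 2 * sinh 1 ^ 2 := by
            rw [mul_right_comm, hc]; field_simp
        _ ≤ sinh 2 := by simpa using two_mul_sinh_sq_le_sinh_two_mul zero_le_one
    calc c * α ^ 2 ≤ c * π ^ 2 := by gcongr
      _ ≤ 1 := hcπ
  have hjordan : cos α ≤ 1 - 2 / π ^ 2 * α ^ 2 :=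
    cos_le_one_sub_mul_cos_sq (abs_le.2 ⟨by linarith [pi_pos], hαπ⟩)
  have hcosh : cosh D ≤ cosh (2 - c * α ^ 2) :=
    calc cosh D ≤ cosh 2 - sinh 1 ^ 2 * (2 / π ^ 2 * α ^ 2) := by
          rw [hlaw]; gcongr; linarith
      _ = cosh 2 + -(c * α ^ 2) * sinh 2 := by linear_combination α ^ 2 * hc
      _ ≤ cosh (2 - c * α ^ 2) := cosh_add_mul_sinh_le_cosh_add 2 _
  have habs := cosh_le_cosh.1 hcosh
  rwa [abs_of_nonneg hD, abs_of_nonneg (by linarith)] at habs
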